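/- For every integer N ≥ 1, a_{1,1}(N+1,x) = 2·(−1)^N · N! · H_N · x, where H_N = 1 + 1/2 + ⋯ + 1/N is the N-th harmonic number. -/

import Mathlib

open Finset

/-- The coefficients `a_{i,j}(N, x)` arising from repeated differentiation of the
λ-Changhee generating function: `a_{0,0}(N,x) = 0`, `a_{1,0}(1,x) = -1`, `a_{0,1}(1,x) = x`,
and for `N ≥ 1`, `i, j ≥ 0` with `1 ≤ i + j ≤ N + 1`,
`a_{i,j}(N+1,x) = -N·a_{i,j}(N,x) - i·a_{i-1,j}(N,x) + (x - j + 1)·a_{i,j-1}(N,x)`,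
with the convention that `a_{i,j}(N,x) = 0` whenever `i < 0`, `j < 0`, or `i + j > N`. -/
noncomputable def aCh : ℕ → ℤ → ℤ → ℝ → ℝ
  | 0, _, _, _ => 0
  | 1, i, j, x => if i = 1 ∧ j = 0 then -1 else if i = 0 ∧ j = 1 then x else 0
  | (N+2), i, j, x =>
      if 0 ≤ i ∧ 0 ≤ j ∧ 1 ≤ i + j ∧ i + j ≤ N + 2 then
        -(N+1 : ℝ) * aCh (N+1) i j x - (i : ℝ) * aCh (N+1) (i-1) j x
          + (x - (j : ℝ) + 1) * aCh (N+1) i (j-1) x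
      else 0

/-!
Unfolding the recurrence once at `(i, j) = (1, 1)` expresses `a_{1,1}(N+2)` through
`a_{1,1}(N+1)`, `a_{0,1}(N+1) = (-1)^N N! x` and `a_{1,0}(N+1) = (-1)^(N+1) N!`. After dividing
by `(-1)^(N+1) (N+1)!` this becomes `H_{N+1} = H_N + 1/(N+1)`, so induction on `N` closes it.
-/

theorem aCh_succ_succ {N : ℕ} {i j : ℤ} (hi : 0 ≤ i) (hj : 0 ≤ j) (hij : 1 ≤ i + j)
    (hijN : i + j ≤ N + 2) (x : ℝ) :
    aCh (N + 2) i j x = -(N + 1 : ℝ) * aCh (N + 1) i j x - (i : ℝ) * aCh (N + 1) (i - 1) j x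
      + (x - (j : ℝ) + 1) * aCh (N + 1) i (j - 1) x := by
  rw [aCh, if_pos ⟨hi, hj, hij, hijN⟩]

theorem aCh_zero_zero (N : ℕ) (x : ℝ) : aCh N 0 0 x = 0 := by
  match N with
  | 0 | 1 | _ + 2 => simp [aCh]

theorem aCh_of_neg_right (N : ℕ) {i j : ℤ} (hj : j < 0) (x : ℝ) : aCh N i j x = 0 := by
  match N with
  | 0 => rfl
  | 1 =>
    have hj1 : j ≠ 1 := by omega
    simp [aCh, hj.ne, hj1]
  | _ + 2 => simp [aCh, not_le.mpr hj]

theorem aCh_one_zero (N : ℕ) (x : ℝ) :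
    aCh (N + 1) 1 0 x = (-1 : ℝ) ^ (N + 1) * N.factorial := by
  induction N with
  | zero => simp [aCh]
  | succ n ih =>
    rw [aCh_succ_succ (by norm_num) le_rfl (by norm_num) (by omega), ih, sub_self,
      aCh_zero_zero, aCh_of_neg_right _ (by norm_num), Nat.factorial_succ]
    push_cast
    ring

theorem aCh_zero_one (N : ℕ) (x : ℝ) :
    aCh (N + 1) 0 1 x = (-1 : ℝ) ^ N * N.factorial * x := by
  induction N with
  | zero => simp [aCh]
  | succ n ih =>
    rw [aCh_succ_succ le_rfl (by norm_num) (by norm_num) (by omega), ih, sub_self,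
      aCh_zero_zero, Nat.factorial_succ]
    push_cast
    ring

theorem aCh_one_one_general (N : ℕ) (x : ℝ) :
    aCh (N + 1) 1 1 x
      = 2 * (-1 : ℝ) ^ N * (Nat.factorial N : ℝ) *
          (∑ i ∈ Finset.Icc 1 N, (1 : ℝ) / i) * x := by
  induction N with
  | zero => simp [aCh]
  | succ n ih =>
    rw [aCh_succ_succ (by norm_num) (by norm_num) (by norm_num) (by omega), ih, sub_self,
      aCh_zero_one, aCh_one_zero, sum_Icc_succ_top (by omega), Nat.factorial_succ]
    push_cast
    field_simp
    ring

/-- For `N ≥ 1`, `a_{1,1}(N+1,x) = 2·(-1)^N · N! · H_N · x`, where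
`H_N = 1 + 1/2 + ⋯ + 1/N` is the `N`-th harmonic number. -/
theorem aCh_one_one (N : ℕ) (hN : 1 ≤ N) (x : ℝ) :
    aCh (N + 1) 1 1 x
      = 2 * (-1 : ℝ) ^ N * (Nat.factorial N : ℝ) *
          (∑ i ∈ Finset.Icc 1 N, (1 : ℝ) / i) * x :=
  aCh_one_one_general N x
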